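/- If D is an ultrafilter on I such that D-almost every X_i is a regular (T_3) space, then the topological ultraproduct ∏_D X_i is regular. -/

import Mathlib

open Filter Topology Set

universe u v

def USetoid {I : Type u} (D : Ultrafilter I) (X : I → Type v) : Setoid (∀ i, X i) where
  r x y := ∀ᶠ i in (D : Filter I), x i = y i
  iseqv := ⟨fun _ => Filter.Eventually.of_forall fun _ => rfl,
    fun h => h.mono fun _ e => e.symm,
    fun h₁ h₂ => (h₁.and h₂).mono fun _ e => e.1.trans e.2⟩

def Uprod {I : Type u} (D : Ultrafilter I) (X : I → Type v) := Quotient (USetoid D X)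

def ultrabox {I : Type u} (D : Ultrafilter I) (X : I → Type v) (U : ∀ i, Set (X i)) :
    Set (Uprod D X) :=
  {q | ∃ x : ∀ i, X i, Quotient.mk (USetoid D X) x = q ∧ {i | x i ∈ U i} ∈ D}

def uTop {I : Type u} (D : Ultrafilter I) (X : I → Type v) [∀ i, TopologicalSpace (X i)] :
    TopologicalSpace (Uprod D X) :=
  TopologicalSpace.generateFrom
    {s | ∃ U : ∀ i, Set (X i), (∀ i, IsOpen (U i)) ∧ s = ultrabox D X U}

/-! An ultrabox depends only on the `D`-germ of its family of sets, and since `D` is an ultrafilter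
the complement of an ultrabox is the ultrabox of the complements; so ultraboxes of sets that are
`D`-almost everywhere closed are closed. Choosing closed neighbourhoods coordinatewise in the
`D`-almost all regular factors then yields closed neighbourhoods inside any basic neighbourhood,
and a point is the ultrabox of its coordinate singletons, hence closed. -/

namespace Uprod

variable {I : Type u} {D : Ultrafilter I} {X : I → Type v}

variable (D) in
def mk (x : ∀ i, X i) : Uprod D X :=
  Quotient.mk (USetoid D X) x

@[elab_as_elim]
theorem ind {p : Uprod D X → Prop} (h : ∀ x, p (mk D x)) (q : Uprod D X) : p q :=
  Quotient.ind h q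

theorem mk_eq_mk {x y : ∀ i, X i} : mk D x = mk D y ↔ ∀ᶠ i in (D : Filter I), x i = y i :=
  Quotient.eq

@[simp]
theorem mk_mem_ultrabox {U : ∀ i, Set (X i)} {x : ∀ i, X i} :
    mk D x ∈ ultrabox D X U ↔ ∀ᶠ i in (D : Filter I), x i ∈ U i := by
  refine ⟨?_, fun h => ⟨x, rfl, h⟩⟩
  rintro ⟨y, hyx, hyU⟩
  filter_upwards [mk_eq_mk.1 hyx, hyU] with i hi hyi
  exact hi ▸ hyi

theorem ultrabox_mono_of_eventually {U V : ∀ i, Set (X i)} (h : ∀ᶠ i in (D : Filter I), U i ⊆ V i) :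
    ultrabox D X U ⊆ ultrabox D X V := by
  refine Uprod.ind fun x hx => ?_
  rw [mk_mem_ultrabox] at hx ⊢
  filter_upwards [hx, h] with i hxi hi using hi hxi

theorem ultrabox_congr {U V : ∀ i, Set (X i)} (h : ∀ᶠ i in (D : Filter I), U i = V i) :
    ultrabox D X U = ultrabox D X V :=
  (ultrabox_mono_of_eventually (h.mono fun _ e => e.le)).antisymm
    (ultrabox_mono_of_eventually (h.mono fun _ e => e.ge))

theorem ultrabox_inter (U V : ∀ i, Set (X i)) :
    ultrabox D X (fun i => U i ∩ V i) = ultrabox D X U ∩ ultrabox D X V := by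
  ext q
  induction q using Uprod.ind
  simp only [mem_inter_iff, mk_mem_ultrabox, eventually_and]

theorem ultrabox_univ : ultrabox D X (fun _ => univ) = univ :=
  eq_univ_of_forall <| Uprod.ind fun _ => mk_mem_ultrabox.2 (Eventually.of_forall mem_univ)

theorem compl_ultrabox (U : ∀ i, Set (X i)) :
    (ultrabox D X U)ᶜ = ultrabox D X (fun i => (U i)ᶜ) := by
  ext q
  induction q using Uprod.ind
  simp only [mem_compl_iff, mk_mem_ultrabox]
  exact Ultrafilter.eventually_not.symm

theorem ultrabox_singleton (x : ∀ i, X i) :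
    ultrabox D X (fun i => {x i}) = {mk D x} := by
  ext q
  induction q using Uprod.ind
  simp only [mk_mem_ultrabox, mem_singleton_iff]
  exact mk_eq_mk.symm

section Topology

variable [∀ i, TopologicalSpace (X i)]

attribute [local instance] uTop

theorem isTopologicalBasis_ultrabox :
    TopologicalSpace.IsTopologicalBasis
      {s : Set (Uprod D X) | ∃ U : ∀ i, Set (X i), (∀ i, IsOpen (U i)) ∧ s = ultrabox D X U} := by
  refine ⟨?_, ?_, rfl⟩
  · rintro _ ⟨U, hU, rfl⟩ _ ⟨V, hV, rfl⟩ q hq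
    refine ⟨_, ⟨fun i => U i ∩ V i, fun i => (hU i).inter (hV i), rfl⟩, ?_⟩
    rw [ultrabox_inter]
    exact ⟨hq, subset_rfl⟩
  · exact sUnion_eq_univ_iff.2 fun q =>
      ⟨_, ⟨fun _ => univ, fun _ => isOpen_univ, ultrabox_univ.symm⟩, mem_univ q⟩

theorem isOpen_ultrabox {U : ∀ i, Set (X i)} (hU : ∀ᶠ i in (D : Filter I), IsOpen (U i)) :
    IsOpen (ultrabox D X U) := by
  classical
  rw [ultrabox_congr (hU.mono fun i hi => (if_pos hi).symm :
    ∀ᶠ i in (D : Filter I), U i = if IsOpen (U i) then U i else ∅)]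
  refine TopologicalSpace.isOpen_generateFrom_of_mem ⟨_, fun i => ?_, rfl⟩
  split_ifs with hi
  exacts [hi, isOpen_empty]

theorem isClosed_ultrabox {U : ∀ i, Set (X i)} (hU : ∀ᶠ i in (D : Filter I), IsClosed (U i)) :
    IsClosed (ultrabox D X U) := by
  rw [← isOpen_compl_iff, compl_ultrabox]
  exact isOpen_ultrabox (hU.mono fun _ hi => hi.isOpen_compl)

theorem ultrabox_mem_nhds {U : ∀ i, Set (X i)} {x : ∀ i, X i}
    (hU : ∀ᶠ i in (D : Filter I), U i ∈ 𝓝 (x i)) : ultrabox D X U ∈ 𝓝 (mk D x) := by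
  refine mem_nhds_iff.2 ⟨ultrabox D X fun i => interior (U i),
    ultrabox_mono_of_eventually (Eventually.of_forall fun i => interior_subset),
    isOpen_ultrabox (Eventually.of_forall fun _ => isOpen_interior), ?_⟩
  simpa only [mk_mem_ultrabox, mem_interior_iff_mem_nhds] using hU

theorem t1Space (h : ∀ᶠ i in (D : Filter I), T1Space (X i)) : T1Space (Uprod D X) where
  t1 := Uprod.ind fun x => ultrabox_singleton (D := D) x ▸
    isClosed_ultrabox (h.mono fun _ _ => isClosed_singleton)

theorem regularSpace (h : ∀ᶠ i in (D : Filter I), RegularSpace (X i)) :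
    RegularSpace (Uprod D X) := by
  refine .of_exists_mem_nhds_isClosed_subset <| Uprod.ind fun x s hs => ?_
  obtain ⟨_, ⟨U, hUo, rfl⟩, hxU, hUs⟩ := isTopologicalBasis_ultrabox.mem_nhds_iff.1 hs
  have : ∀ᶠ i in (D : Filter I), ∃ V, V ∈ 𝓝 (x i) ∧ IsClosed V ∧ V ⊆ U i := by
    filter_upwards [h, mk_mem_ultrabox.1 hxU] with i _ hxi
    exact exists_mem_nhds_isClosed_subset ((hUo i).mem_nhds hxi)
  obtain ⟨V, hV⟩ := Filter.skolem.1 this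
  exact ⟨ultrabox D X V, ultrabox_mem_nhds (hV.mono fun _ => And.left),
    isClosed_ultrabox (hV.mono fun _ h => h.2.1),
    (ultrabox_mono_of_eventually (hV.mono fun _ h => h.2.2)).trans hUs⟩

end Topology

end Uprod

theorem ultraproduct_regular {I : Type u} (D : Ultrafilter I) (X : I → Type u)
    [∀ i, TopologicalSpace (X i)] (h : {i | T3Space (X i)} ∈ D) :
    letI := uTop D X
    T3Space (Uprod D X) := by
  let := uTop D X
  have hT3 : ∀ᶠ i in (D : Filter I), T3Space (X i) := h
  have := Uprod.t1Space (X := X) (hT3.mono fun _ _ => inferInstance)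
  have := Uprod.regularSpace (X := X) (hT3.mono fun _ _ => inferInstance)
  exact { }
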